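/- Let Σ be an ed signature and M1, M2 bisimilar Σ-edts. Then for every hybrid-free sentence ρ: M1 ⊨ ρ if and only if M2 ⊨ ρ. -/
import Mathlib


/-!
Framework: event/data transition systems (edts) over an ed signature Σ = (E, A)
with a data universe `Data`, a type `SP` of state predicates and a type `TP` of
transition predicates (interpreted via `spSat`/`tpSat`).
-/

/-- Configurations: a control state paired with an `A`-data state. -/
abbrev Conf' (C A Data : Type) : Type := C × (A → Data)

/-- The raw data of a Σ-event/data transition system with control states `C`. -/
structure PreEDTS (E A Data C : Type) : Type where
  conf : Set (Conf' C A Data)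
  rel : E → Set (Conf' C A Data × Conf' C A Data)
  c0 : C
  init : Set (Conf' C A Data)

/-- `M` is a genuine Σ-edts: transitions stay inside the configurations, the
initial configurations form a non-empty subset of the configurations, all with
control state `c0`, and every configuration is reachable from an initial one. -/
def PreEDTS.IsEDTS {E A Data C : Type} (M : PreEDTS E A Data C) : Prop :=
  (∀ (e : E) p, p ∈ M.rel e → p.1 ∈ M.conf ∧ p.2 ∈ M.conf) ∧
  M.init ⊆ M.conf ∧
  (∀ γ ∈ M.init, γ.1 = M.c0) ∧
  M.init.Nonempty ∧
  (∀ γ ∈ M.conf, ∃ γ0 ∈ M.init,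
    Relation.ReflTransGen (fun γ γ' => ∃ e : E, (γ, γ') ∈ M.rel e) γ0 γ)

/-- Σ-ed actions: atomic actions `e⧸ψ`, union, sequential composition, iteration. -/
inductive Act (E TP : Type) : Type where
  | atom : E → TP → Act E TP
  | choice : Act E TP → Act E TP → Act E TP
  | seq : Act E TP → Act E TP → Act E TP
  | star : Act E TP → Act E TP

/-- Interpretation of Σ-ed actions over an edts `M`. -/
def actRel {E A Data C TP : Type} (tpSat : TP → (A → Data) → (A → Data) → Prop)
    (M : PreEDTS E A Data C) :
    Act E TP → Conf' C A Data → Conf' C A Data → Prop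
  | Act.atom e ψ => fun γ γ' => (γ, γ') ∈ M.rel e ∧ tpSat ψ γ.2 γ'.2
  | Act.choice l₁ l₂ => fun γ γ' => actRel tpSat M l₁ γ γ' ∨ actRel tpSat M l₂ γ γ'
  | Act.seq l₁ l₂ => fun γ γ' => ∃ γm, actRel tpSat M l₁ γ γm ∧ actRel tpSat M l₂ γm γ'
  | Act.star l => Relation.ReflTransGen (actRel tpSat M l)

/-- Hybrid-free Σ-ed formulae: `ρ ::= φ | ⟨λ⟩ρ | true | ¬ρ | ρ₁ ∨ ρ₂`. -/
inductive HFrm (E TP SP : Type) : Type where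
  | st : SP → HFrm E TP SP
  | dia : Act E TP → HFrm E TP SP → HFrm E TP SP
  | tt : HFrm E TP SP
  | neg : HFrm E TP SP → HFrm E TP SP
  | or : HFrm E TP SP → HFrm E TP SP → HFrm E TP SP

/-- Satisfaction of hybrid-free sentences at a configuration. -/
def hsat {E A Data C SP TP : Type} (spSat : SP → (A → Data) → Prop)
    (tpSat : TP → (A → Data) → (A → Data) → Prop)
    (M : PreEDTS E A Data C) : Conf' C A Data → HFrm E TP SP → Prop
  | γ, HFrm.st φ => spSat φ γ.2
  | γ, HFrm.dia l ρ => ∃ γ', actRel tpSat M l γ γ' ∧ hsat spSat tpSat M γ' ρ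
  | _, HFrm.tt => True
  | γ, HFrm.neg ρ => ¬ hsat spSat tpSat M γ ρ
  | γ, HFrm.or ρ₁ ρ₂ => hsat spSat tpSat M γ ρ₁ ∨ hsat spSat tpSat M γ ρ₂

/-- Bisimulation relations `B ⊆ Conf(M1) × Conf(M2)`: conditions (atom), (zig), (zag). -/
structure IsBisim {E A Data C₁ C₂ SP TP : Type}
    (spSat : SP → (A → Data) → Prop)
    (tpSat : TP → (A → Data) → (A → Data) → Prop)
    (M₁ : PreEDTS E A Data C₁) (M₂ : PreEDTS E A Data C₂)
    (B : Conf' C₁ A Data → Conf' C₂ A Data → Prop) : Prop where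
  dom : ∀ γ₁ γ₂, B γ₁ γ₂ → γ₁ ∈ M₁.conf ∧ γ₂ ∈ M₂.conf
  atom : ∀ γ₁ γ₂, B γ₁ γ₂ → ∀ φ : SP, spSat φ γ₁.2 ↔ spSat φ γ₂.2
  zig : ∀ γ₁ γ₂, B γ₁ γ₂ → ∀ (e : E) (ψ : TP) γ₁',
    (γ₁, γ₁') ∈ M₁.rel e → tpSat ψ γ₁.2 γ₁'.2 →
    ∃ γ₂', ((γ₂, γ₂') ∈ M₂.rel e ∧ tpSat ψ γ₂.2 γ₂'.2) ∧ B γ₁' γ₂'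
  zag : ∀ γ₁ γ₂, B γ₁ γ₂ → ∀ (e : E) (ψ : TP) γ₂',
    (γ₂, γ₂') ∈ M₂.rel e → tpSat ψ γ₂.2 γ₂'.2 →
    ∃ γ₁', ((γ₁, γ₁') ∈ M₁.rel e ∧ tpSat ψ γ₁.2 γ₁'.2) ∧ B γ₁' γ₂'

/-- `M₁` and `M₂` are bisimilar: there is a bisimulation relation additionally
satisfying the (init) condition. -/
def Bisimilar {E A Data C₁ C₂ SP TP : Type}
    (spSat : SP → (A → Data) → Prop)
    (tpSat : TP → (A → Data) → (A → Data) → Prop)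
    (M₁ : PreEDTS E A Data C₁) (M₂ : PreEDTS E A Data C₂) : Prop :=
  ∃ B, IsBisim spSat tpSat M₁ M₂ B ∧
    (∀ γ₁ ∈ M₁.init, ∃ γ₂ ∈ M₂.init, B γ₁ γ₂) ∧
    (∀ γ₂ ∈ M₂.init, ∃ γ₁ ∈ M₁.init, B γ₁ γ₂)

/-- `M ⊨ ρ`: the sentence `ρ` holds at all initial configurations of `M`. -/
def MsatHF {E A Data C SP TP : Type} (spSat : SP → (A → Data) → Prop)
    (tpSat : TP → (A → Data) → (A → Data) → Prop)
    (M : PreEDTS E A Data C) (ρ : HFrm E TP SP) : Prop :=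
  ∀ γ0 ∈ M.init, hsat spSat tpSat M γ0 ρ

section Aux

variable {E A Data C₁ C₂ SP TP : Type}
  {spSat : SP → (A → Data) → Prop}
  {tpSat : TP → (A → Data) → (A → Data) → Prop}
  {M₁ : PreEDTS E A Data C₁} {M₂ : PreEDTS E A Data C₂}
  {B : Conf' C₁ A Data → Conf' C₂ A Data → Prop}

lemma act_zig (hB : IsBisim spSat tpSat M₁ M₂ B) (l : Act E TP) :
    ∀ γ₁ γ₂ γ₁', B γ₁ γ₂ → actRel tpSat M₁ l γ₁ γ₁' →
      ∃ γ₂', actRel tpSat M₂ l γ₂ γ₂' ∧ B γ₁' γ₂' := by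
  induction l with
  | atom e ψ =>
    intro γ₁ γ₂ γ₁' hb h
    obtain ⟨γ₂', ⟨h1, h2⟩, hb'⟩ := hB.zig γ₁ γ₂ hb e ψ γ₁' h.1 h.2
    exact ⟨γ₂', ⟨h1, h2⟩, hb'⟩
  | choice l₁ l₂ ih₁ ih₂ =>
    intro γ₁ γ₂ γ₁' hb h
    rcases h with h | h
    · obtain ⟨γ₂', h', hb'⟩ := ih₁ γ₁ γ₂ γ₁' hb h
      exact ⟨γ₂', Or.inl h', hb'⟩
    · obtain ⟨γ₂', h', hb'⟩ := ih₂ γ₁ γ₂ γ₁' hb h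
      exact ⟨γ₂', Or.inr h', hb'⟩
  | seq l₁ l₂ ih₁ ih₂ =>
    intro γ₁ γ₂ γ₁' hb h
    obtain ⟨γm, h1, h2⟩ := h
    obtain ⟨γm', h1', hbm⟩ := ih₁ γ₁ γ₂ γm hb h1
    obtain ⟨γ₂', h2', hb'⟩ := ih₂ γm γm' γ₁' hbm h2
    exact ⟨γ₂', ⟨γm', h1', h2'⟩, hb'⟩
  | star l ih =>
    intro γ₁ γ₂ γ₁' hb h
    induction h with
    | refl => exact ⟨γ₂, Relation.ReflTransGen.refl, hb⟩
    | tail _ hstep ihh =>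
      obtain ⟨γ₂m, hrel, hbm⟩ := ihh
      obtain ⟨γ₂', h', hb'⟩ := ih _ γ₂m _ hbm hstep
      exact ⟨γ₂', hrel.tail h', hb'⟩

lemma act_zag (hB : IsBisim spSat tpSat M₁ M₂ B) (l : Act E TP) :
    ∀ γ₁ γ₂ γ₂', B γ₁ γ₂ → actRel tpSat M₂ l γ₂ γ₂' →
      ∃ γ₁', actRel tpSat M₁ l γ₁ γ₁' ∧ B γ₁' γ₂' := by
  induction l with
  | atom e ψ =>
    intro γ₁ γ₂ γ₂' hb h
    obtain ⟨γ₁', ⟨h1, h2⟩, hb'⟩ := hB.zag γ₁ γ₂ hb e ψ γ₂' h.1 h.2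
    exact ⟨γ₁', ⟨h1, h2⟩, hb'⟩
  | choice l₁ l₂ ih₁ ih₂ =>
    intro γ₁ γ₂ γ₂' hb h
    rcases h with h | h
    · obtain ⟨γ₁', h', hb'⟩ := ih₁ γ₁ γ₂ γ₂' hb h
      exact ⟨γ₁', Or.inl h', hb'⟩
    · obtain ⟨γ₁', h', hb'⟩ := ih₂ γ₁ γ₂ γ₂' hb h
      exact ⟨γ₁', Or.inr h', hb'⟩
  | seq l₁ l₂ ih₁ ih₂ =>
    intro γ₁ γ₂ γ₂' hb h
    obtain ⟨γm, h1, h2⟩ := h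
    obtain ⟨γm', h1', hbm⟩ := ih₁ γ₁ γ₂ γm hb h1
    obtain ⟨γ₁', h2', hb'⟩ := ih₂ γm' γm γ₂' hbm h2
    exact ⟨γ₁', ⟨γm', h1', h2'⟩, hb'⟩
  | star l ih =>
    intro γ₁ γ₂ γ₂' hb h
    induction h with
    | refl => exact ⟨γ₁, Relation.ReflTransGen.refl, hb⟩
    | tail _ hstep ihh =>
      obtain ⟨γ₁m, hrel, hbm⟩ := ihh
      obtain ⟨γ₁', h', hb'⟩ := ih γ₁m _ _ hbm hstep
      exact ⟨γ₁', hrel.tail h', hb'⟩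

lemma hsat_iff (hB : IsBisim spSat tpSat M₁ M₂ B) (ρ : HFrm E TP SP) :
    ∀ γ₁ γ₂, B γ₁ γ₂ →
      (hsat spSat tpSat M₁ γ₁ ρ ↔ hsat spSat tpSat M₂ γ₂ ρ) := by
  induction ρ with
  | st φ => intro γ₁ γ₂ hb; exact hB.atom γ₁ γ₂ hb φ
  | dia l ρ ih =>
    intro γ₁ γ₂ hb
    constructor
    · rintro ⟨γ₁', h, hs⟩
      obtain ⟨γ₂', h', hb'⟩ := act_zig hB l γ₁ γ₂ γ₁' hb h
      exact ⟨γ₂', h', (ih γ₁' γ₂' hb').mp hs⟩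
    · rintro ⟨γ₂', h, hs⟩
      obtain ⟨γ₁', h', hb'⟩ := act_zag hB l γ₁ γ₂ γ₂' hb h
      exact ⟨γ₁', h', (ih γ₁' γ₂' hb').mpr hs⟩
  | tt => intro _ _ _; simp [hsat]
  | neg ρ ih =>
    intro γ₁ γ₂ hb
    exact not_congr (ih γ₁ γ₂ hb)
  | or ρ₁ ρ₂ ih₁ ih₂ =>
    intro γ₁ γ₂ hb
    exact or_congr (ih₁ γ₁ γ₂ hb) (ih₂ γ₁ γ₂ hb)

end Aux

/-- Bisimilar Σ-edts satisfy the same hybrid-free sentences. -/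
theorem bisimilar_same_hybrid_free_sentences
    {E A Data C₁ C₂ SP TP : Type} [Finite E]
    (spSat : SP → (A → Data) → Prop)
    (tpSat : TP → (A → Data) → (A → Data) → Prop)
    (M₁ : PreEDTS E A Data C₁) (M₂ : PreEDTS E A Data C₂)
    (hM₁ : M₁.IsEDTS) (hM₂ : M₂.IsEDTS)
    (hbis : Bisimilar spSat tpSat M₁ M₂) :
    ∀ ρ : HFrm E TP SP,
      MsatHF spSat tpSat M₁ ρ ↔ MsatHF spSat tpSat M₂ ρ := by
  obtain ⟨B, hB, hinit₁, hinit₂⟩ := hbis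
  intro ρ
  constructor
  · intro h γ₂ hγ₂
    obtain ⟨γ₁, hγ₁, hb⟩ := hinit₂ γ₂ hγ₂
    exact (hsat_iff hB ρ γ₁ γ₂ hb).mp (h γ₁ hγ₁)
  · intro h γ₁ hγ₁
    obtain ⟨γ₂, hγ₂, hb⟩ := hinit₁ γ₁ hγ₁
    exact (hsat_iff hB ρ γ₁ γ₂ hb).mpr (h γ₂ hγ₂)
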